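/- For a finite lower set Θ ⊆ ℕ^d, the unique solution of Σ_{i ∈ Θ, i ≥ j} t_i = 1 for all j ∈ Θ is given by the inclusion–exclusion formula t_i = Σ_{e ∈ {0,1}^d, i+e ∈ Θ} (-1)^{|e|}, where |e| = Σ_k e_k. -/
import Mathlib


/-- Inclusion–exclusion formula for the sparse-grid combination coefficients:
`t_i = ∑_{e ∈ {0,1}^d, i+e ∈ Θ} (-1)^{|e|}` solves the system
`∑_{i ∈ Θ, i ≥ j} t_i = 1` for every `j ∈ Θ`. -/
theorem combination_coefficients_inclusion_exclusion (d : ℕ) (Θ : Finset (Fin d → ℕ))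
    (hlower : ∀ ν ∈ Θ, ∀ i : Fin d → ℕ, (∀ k, i k ≤ ν k) → i ∈ Θ)
    (t : (Fin d → ℕ) → ℤ)
    (ht : ∀ i : Fin d → ℕ, t i =
      ∑ e ∈ Finset.univ.filter
          (fun e : Fin d → Bool => (fun k => i k + (if e k then 1 else 0)) ∈ Θ),
        (-1 : ℤ) ^ (Finset.univ.filter (fun k => e k = true)).card) :
    ∀ j ∈ Θ, ∑ i ∈ Θ.filter (fun i => ∀ k, j k ≤ i k), t i = 1 := by
  intro j hj
  set A := Θ.filter (fun i => ∀ k, j k ≤ i k) with hA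
  have hjA : j ∈ A := by simp [hA, hj]
  have hmemA : ∀ m, m ∈ A ↔ m ∈ Θ ∧ ∀ k, j k ≤ m k := by
    intro m; simp [hA]
  calc ∑ i ∈ A, t i
      = ∑ i ∈ A, ∑ e ∈ Finset.univ.filter
          (fun e : Fin d → Bool => (fun k => i k + (if e k then 1 else 0)) ∈ Θ),
        (-1 : ℤ) ^ (Finset.univ.filter (fun k => e k = true)).card :=
        Finset.sum_congr rfl fun i _ => ht i
    _ = ∑ m ∈ A, ∑ e ∈ Finset.univ.filter
          (fun e : Fin d → Bool => ∀ k, j k + (if e k then 1 else 0) ≤ m k),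
        (-1 : ℤ) ^ (Finset.univ.filter (fun k => e k = true)).card := by
        rw [Finset.sum_sigma', Finset.sum_sigma']
        refine Finset.sum_bij'
          (fun p _ => ⟨fun k => p.1 k + (if p.2 k then 1 else 0), p.2⟩)
          (fun p _ => ⟨fun k => p.1 k - (if p.2 k then 1 else 0), p.2⟩)
          ?hi ?hj ?left ?right ?h
        case hi =>
          rintro ⟨i, e⟩ hp
          simp only [Finset.mem_sigma, Finset.mem_filter, Finset.mem_univ, true_and] at hp ⊢
          obtain ⟨hiA, hie⟩ := hp
          rw [hmemA] at hiA
          refine ⟨(hmemA _).2 ⟨hie, fun k => le_trans (hiA.2 k) (Nat.le_add_right _ _)⟩,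
            fun k => Nat.add_le_add_right (hiA.2 k) _⟩
        case hj =>
          rintro ⟨m, e⟩ hp
          simp only [Finset.mem_sigma, Finset.mem_filter, Finset.mem_univ, true_and] at hp ⊢
          obtain ⟨hmA, hme⟩ := hp
          rw [hmemA] at hmA
          have hle : ∀ k, (if e k then 1 else 0) ≤ m k := fun k =>
            le_trans (Nat.le_add_left _ _) (hme k)
          have heq : (fun k => m k - (if e k then 1 else 0) + (if e k then 1 else 0)) = m := by
            funext k; exact Nat.sub_add_cancel (hle k)
          refine ⟨(hmemA _).2 ⟨hlower m hmA.1 _ (fun k => Nat.sub_le _ _),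
            fun k => Nat.le_sub_of_add_le (hme k)⟩, ?_⟩
          show (fun k => (m k - if e k then 1 else 0) + if e k then 1 else 0) ∈ Θ
          rw [show (fun k => (m k - if e k then 1 else 0) + if e k then 1 else 0) = m from
            funext fun k => Nat.sub_add_cancel (hle k)]
          exact hmA.1
        case left =>
          rintro ⟨i, e⟩ hp
          simp only [Sigma.mk.inj_iff, heq_eq_eq, and_true]
          funext k; omega
        case right =>
          rintro ⟨m, e⟩ hp
          simp only [Finset.mem_sigma, Finset.mem_filter, Finset.mem_univ, true_and] at hp
          have hle : ∀ k, (if e k then 1 else 0) ≤ m k := fun k =>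
            le_trans (Nat.le_add_left _ _) (hp.2 k)
          simp only [Sigma.mk.inj_iff, heq_eq_eq, and_true]
          funext k; exact Nat.sub_add_cancel (hle k)
        case h => rintro ⟨i, e⟩ _; rfl
    _ = ∑ m ∈ A, (if m = j then (1 : ℤ) else 0) := by
        apply Finset.sum_congr rfl
        intro m hmA
        rw [hmemA] at hmA
        have step1 : ∀ e : Fin d → Bool,
            (-1 : ℤ) ^ (Finset.univ.filter (fun k => e k = true)).card
              = ∏ k, (if e k then (-1 : ℤ) else 1) := by
          intro e
          rw [Finset.prod_ite, Finset.prod_const, Finset.prod_const, one_pow, mul_one]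
        rw [Finset.sum_filter]
        have step2 : ∀ e : Fin d → Bool,
            (if (∀ k, j k + (if e k then 1 else 0) ≤ m k) then
              (-1 : ℤ) ^ (Finset.univ.filter (fun k => e k = true)).card else 0)
            = ∏ k, (if j k + (if e k then 1 else 0) ≤ m k then
                (if e k then (-1 : ℤ) else 1) else 0) := by
          intro e
          by_cases h : ∀ k, j k + (if e k then 1 else 0) ≤ m k
          · rw [if_pos h, step1]
            exact Finset.prod_congr rfl fun k _ => (if_pos (h k)).symm
          · rw [if_neg h]
            push_neg at h
            obtain ⟨k, hk⟩ := h
            refine (Finset.prod_eq_zero (Finset.mem_univ k) ?_).symm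
            exact if_neg (not_le.mpr hk)
        simp_rw [step2]
        rw [← Fintype.piFinset_univ, ← Finset.prod_univ_sum
          (t := fun _ : Fin d => (Finset.univ : Finset Bool))
          (f := fun k b => if (j k + if b then 1 else 0) ≤ m k then
            (if b then (-1 : ℤ) else 1) else 0)]
        have step3 : ∀ k, (∑ b : Bool, (if j k + (if b then 1 else 0) ≤ m k then
            (if b then (-1 : ℤ) else 1) else 0)) = (if m k = j k then 1 else 0) := by
          intro k
          rw [Fintype.sum_bool]
          simp only [if_true, Bool.false_eq_true, if_false, Nat.add_zero]
          rw [if_pos (hmA.2 k)]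
          rcases eq_or_lt_of_le (hmA.2 k) with h | h
          · rw [if_neg (by omega), if_pos h.symm]; omega
          · rw [if_pos (by omega), if_neg (by omega)]; omega
        simp_rw [step3]
        by_cases h : m = j
        · subst h; simp
        · rw [if_neg h]
          have : ∃ k, m k ≠ j k := by
            by_contra hc; push_neg at hc; exact h (funext hc)
          obtain ⟨k, hk⟩ := this
          exact Finset.prod_eq_zero (Finset.mem_univ k) (if_neg hk)
    _ = 1 := by rw [Finset.sum_ite_eq' A j (fun _ => (1 : ℤ)), if_pos hjA]
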